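/- Softness goes away: if Δ, Θ ⟶ Ω, Ω_Z where Δ ⟶ Ω and Θ is soft (consists only of existential declarations, solved or unsolved), then [Ω, Ω_Z](Δ, Θ) = [Ω]Δ. -/

import Mathlib

/-- Sorts κ ∈ {⋆, ℕ}. -/
inductive Srt : Type
  | star
  | nat
  deriving DecidableEq

/-- Algorithmic types and index terms, with named universal variables `var`
and existential variables `evar`. -/
inductive Ty : Type
  | unit
  | var (x : ℕ)
  | evar (a : ℕ)
  | zero
  | succ (t : Ty)
  | arrow (A B : Ty)
  | sum (A B : Ty)
  | prod (A B : Ty)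
  | all (x : ℕ) (κ : Srt) (A : Ty)
  | ex (x : ℕ) (κ : Srt) (A : Ty)
  | impl (t u : Ty) (A : Ty)
  | wth (A : Ty) (t u : Ty)
  deriving DecidableEq

namespace Ty

/-- Substitution `[τ/α]` for a universal variable. -/
def subst (τ : Ty) (α : ℕ) : Ty → Ty
  | unit => unit
  | var x => if x = α then τ else var x
  | evar a => evar a
  | zero => zero
  | succ t => succ (subst τ α t)
  | arrow A B => arrow (subst τ α A) (subst τ α B)
  | sum A B => sum (subst τ α A) (subst τ α B)
  | prod A B => prod (subst τ α A) (subst τ α B)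
  | all x κ A => all x κ (if x = α then A else subst τ α A)
  | ex x κ A => ex x κ (if x = α then A else subst τ α A)
  | impl t u A => impl (subst τ α t) (subst τ α u) (subst τ α A)
  | wth A t u => wth (subst τ α A) (subst τ α t) (subst τ α u)

/-- Substitution `[τ/α̂]` for an existential variable. -/
def substE (τ : Ty) (a : ℕ) : Ty → Ty
  | unit => unit
  | var x => var x
  | evar b => if b = a then τ else evar b
  | zero => zero
  | succ t => succ (substE τ a t)
  | arrow A B => arrow (substE τ a A) (substE τ a B)
  | sum A B => sum (substE τ a A) (substE τ a B)
  | prod A B => prod (substE τ a A) (substE τ a B)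
  | all x κ A => all x κ (substE τ a A)
  | ex x κ A => ex x κ (substE τ a A)
  | impl t u A => impl (substE τ a t) (substE τ a u) (substE τ a A)
  | wth A t u => wth (substE τ a A) (substE τ a t) (substE τ a u)

/-- The free existential variables of a type. -/
def fev : Ty → List ℕ
  | unit => []
  | var _ => []
  | evar a => [a]
  | zero => []
  | succ t => fev t
  | arrow A B => fev A ++ fev B
  | sum A B => fev A ++ fev B
  | prod A B => fev A ++ fev B
  | all _ _ A => fev A
  | ex _ _ A => fev A
  | impl t u A => fev t ++ fev u ++ fev A
  | wth A t u => fev A ++ fev t ++ fev u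

end Ty

/-- Entries of an algorithmic context: universal variable declarations `α:κ`,
term variable declarations `x:A`, unsolved existentials `α̂:κ`, solved
existentials `α̂:κ = τ`, equations `α = τ`, and markers `►α̂`. -/
inductive CtxEntry : Type
  | uvar (α : ℕ) (κ : Srt)
  | tvar (x : ℕ) (A : Ty)
  | evar (a : ℕ) (κ : Srt)
  | solved (a : ℕ) (κ : Srt) (τ : Ty)
  | eqn (α : ℕ) (τ : Ty)
  | marker (a : ℕ)
  deriving DecidableEq

/-- Algorithmic contexts, as lists whose head is the rightmost entry:
`Γ, e` is `e :: Γ` and `Γ₀, Γ₁` is `Γ₁ ++ Γ₀`. -/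
abbrev ACtx := List CtxEntry

/-- Context application `[Γ]t`: substitute solutions of solved existential
variables and equated universal variables, iteratively. -/
def applyCtx : ACtx → Ty → Ty
  | [], t => t
  | CtxEntry.solved a _ τ :: Γ, t => applyCtx Γ (Ty.substE τ a t)
  | CtxEntry.eqn α τ :: Γ, t => applyCtx Γ (Ty.subst τ α t)
  | CtxEntry.uvar _ _ :: Γ, t => applyCtx Γ t
  | CtxEntry.tvar _ _ :: Γ, t => applyCtx Γ t
  | CtxEntry.evar _ _ :: Γ, t => applyCtx Γ t
  | CtxEntry.marker _ :: Γ, t => applyCtx Γ t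

/-- Algorithmic sorting judgment `Γ ⊢ t : κ`. -/
inductive ASort : ACtx → Ty → Srt → Prop
  | var {Γ α κ} : CtxEntry.uvar α κ ∈ Γ → ASort Γ (Ty.var α) κ
  | evar {Γ a κ} : CtxEntry.evar a κ ∈ Γ → ASort Γ (Ty.evar a) κ
  | solvedEvar {Γ a κ τ} : CtxEntry.solved a κ τ ∈ Γ → ASort Γ (Ty.evar a) κ
  | unit {Γ} : ASort Γ Ty.unit Srt.star
  | zero {Γ} : ASort Γ Ty.zero Srt.nat
  | succ {Γ t} : ASort Γ t Srt.nat → ASort Γ (Ty.succ t) Srt.nat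
  | arrow {Γ A B} : ASort Γ A Srt.star → ASort Γ B Srt.star →
      ASort Γ (Ty.arrow A B) Srt.star
  | sum {Γ A B} : ASort Γ A Srt.star → ASort Γ B Srt.star →
      ASort Γ (Ty.sum A B) Srt.star
  | prod {Γ A B} : ASort Γ A Srt.star → ASort Γ B Srt.star →
      ASort Γ (Ty.prod A B) Srt.star

/-- Well-formedness `Γ ⊢ t = u prop` of propositions (equations over sort ℕ). -/
inductive APropWF : ACtx → Ty → Ty → Prop
  | eq {Γ t u} : ASort Γ t Srt.nat → ASort Γ u Srt.nat → APropWF Γ t u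

/-- Algorithmic type well-formedness `Γ ⊢ A type`. -/
inductive ATyWF : ACtx → Ty → Prop
  | var {Γ α} : CtxEntry.uvar α Srt.star ∈ Γ → ATyWF Γ (Ty.var α)
  | evar {Γ a} : CtxEntry.evar a Srt.star ∈ Γ → ATyWF Γ (Ty.evar a)
  | solvedEvar {Γ a τ} : CtxEntry.solved a Srt.star τ ∈ Γ → ATyWF Γ (Ty.evar a)
  | unit {Γ} : ATyWF Γ Ty.unit
  | arrow {Γ A B} : ATyWF Γ A → ATyWF Γ B → ATyWF Γ (Ty.arrow A B)
  | sum {Γ A B} : ATyWF Γ A → ATyWF Γ B → ATyWF Γ (Ty.sum A B)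
  | prod {Γ A B} : ATyWF Γ A → ATyWF Γ B → ATyWF Γ (Ty.prod A B)
  | all {Γ x κ A} : ATyWF (CtxEntry.uvar x κ :: Γ) A → ATyWF Γ (Ty.all x κ A)
  | ex {Γ x κ A} : ATyWF (CtxEntry.uvar x κ :: Γ) A → ATyWF Γ (Ty.ex x κ A)
  | impl {Γ t u A} : APropWF Γ t u → ATyWF Γ A → ATyWF Γ (Ty.impl t u A)
  | wth {Γ A t u} : ATyWF Γ A → APropWF Γ t u → ATyWF Γ (Ty.wth A t u)

/-- The variable(s) declared by a context entry (equations and markers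
declare nothing). -/
def declOf : CtxEntry → Option ℕ
  | CtxEntry.uvar α _ => some α
  | CtxEntry.tvar x _ => some x
  | CtxEntry.evar a _ => some a
  | CtxEntry.solved a _ _ => some a
  | CtxEntry.eqn _ _ => none
  | CtxEntry.marker _ => none

/-- The names occurring in a context entry (for freshness). -/
def entryNames : CtxEntry → List ℕ
  | CtxEntry.uvar α _ => [α]
  | CtxEntry.tvar x _ => [x]
  | CtxEntry.evar a _ => [a]
  | CtxEntry.solved a _ _ => [a]
  | CtxEntry.eqn _ _ => []
  | CtxEntry.marker a => [a]

/-- The domain of a context: all declared names. -/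
def dom : ACtx → List ℕ
  | [] => []
  | e :: Γ => entryNames e ++ dom Γ

/-- Γ contains an equation for the universal variable α. -/
def hasEqn (Γ : ACtx) (α : ℕ) : Prop :=
  ∃ τ, CtxEntry.eqn α τ ∈ Γ

/-- Context well-formedness `⊢ Γ ctx`. -/
inductive CtxWF : ACtx → Prop
  | nil : CtxWF []
  | uvar {Γ α κ} : CtxWF Γ → α ∉ dom Γ → CtxWF (CtxEntry.uvar α κ :: Γ)
  | tvar {Γ x A} : CtxWF Γ → x ∉ dom Γ → ATyWF Γ A → CtxWF (CtxEntry.tvar x A :: Γ)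
  | evar {Γ a κ} : CtxWF Γ → a ∉ dom Γ → CtxWF (CtxEntry.evar a κ :: Γ)
  | solved {Γ a κ τ} : CtxWF Γ → a ∉ dom Γ → ASort Γ τ κ →
      CtxWF (CtxEntry.solved a κ τ :: Γ)
  | eqn {Γ α κ τ} : CtxWF Γ → CtxEntry.uvar α κ ∈ Γ → ¬ hasEqn Γ α →
      ASort Γ τ κ → CtxWF (CtxEntry.eqn α τ :: Γ)
  | marker {Γ a} : CtxWF Γ → a ∉ dom Γ → CtxWF (CtxEntry.marker a :: Γ)

/-- Context extension `Γ ⟶ Δ`. -/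
inductive CtxExt : ACtx → ACtx → Prop
  | nil : CtxExt [] []
  | tvar {Γ Δ x A A'} : CtxExt Γ Δ → applyCtx Δ A = applyCtx Δ A' →
      CtxExt (CtxEntry.tvar x A :: Γ) (CtxEntry.tvar x A' :: Δ)
  | uvar {Γ Δ α κ} : CtxExt Γ Δ → CtxExt (CtxEntry.uvar α κ :: Γ) (CtxEntry.uvar α κ :: Δ)
  | evar {Γ Δ a κ} : CtxExt Γ Δ → CtxExt (CtxEntry.evar a κ :: Γ) (CtxEntry.evar a κ :: Δ)
  | solved {Γ Δ a κ t t'} : CtxExt Γ Δ → applyCtx Δ t = applyCtx Δ t' →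
      CtxExt (CtxEntry.solved a κ t :: Γ) (CtxEntry.solved a κ t' :: Δ)
  | solve {Γ Δ a κ t} : CtxExt Γ Δ →
      CtxExt (CtxEntry.evar a κ :: Γ) (CtxEntry.solved a κ t :: Δ)
  | eqn {Γ Δ α t t'} : CtxExt Γ Δ → applyCtx Δ t = applyCtx Δ t' →
      CtxExt (CtxEntry.eqn α t :: Γ) (CtxEntry.eqn α t' :: Δ)
  | marker {Γ Δ a} : CtxExt Γ Δ → CtxExt (CtxEntry.marker a :: Γ) (CtxEntry.marker a :: Δ)
  | add {Γ Δ a κ} : CtxExt Γ Δ → CtxExt Γ (CtxEntry.evar a κ :: Δ)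
  | addSolved {Γ Δ a κ t} : CtxExt Γ Δ → CtxExt Γ (CtxEntry.solved a κ t :: Δ)

/-- `u` is declared in `Γ`. -/
def DeclaredIn (Γ : ACtx) (u : ℕ) : Prop :=
  ∃ e ∈ Γ, declOf e = some u

/-- `u` is declared (strictly) to the left of `v` in `Γ`
(recall the head of the list is the rightmost entry). -/
def DeclaredLeftOf (Γ : ACtx) (u v : ℕ) : Prop :=
  ∃ (Γ₃ Γ₂ Γ₁ : ACtx) (e₂ e₁ : CtxEntry),
    Γ = Γ₃ ++ e₂ :: Γ₂ ++ e₁ :: Γ₁ ∧ declOf e₁ = some u ∧ declOf e₂ = some v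

/-- A complete context: every existential variable is solved. -/
def Complete (Ω : ACtx) : Prop :=
  ∀ (a : ℕ) (κ : Srt), CtxEntry.evar a κ ∉ Ω

/-- A soft context: only (solved or unsolved) existential declarations. -/
def Soft (Θ : ACtx) : Prop :=
  ∀ e ∈ Θ, (∃ a κ, e = CtxEntry.evar a κ) ∨ (∃ a κ τ, e = CtxEntry.solved a κ τ)

/-- Entries of declarative contexts. -/
inductive DEntry : Type
  | uvar (α : ℕ) (κ : Srt)
  | tvar (x : ℕ) (A : Ty)
  deriving DecidableEq

abbrev DCtx := List DEntry

/-- Substitution applied pointwise to a declarative context. -/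
def substDCtx (τ : Ty) (α : ℕ) : DCtx → DCtx :=
  List.map fun e =>
    match e with
    | DEntry.uvar β κ => DEntry.uvar β κ
    | DEntry.tvar x A => DEntry.tvar x (Ty.subst τ α A)

/-- Context application `[Ω]Γ` of a (complete) context `Ω` to a context `Γ`
that it extends, producing a declarative context: solutions are substituted,
and existential declarations and markers are dropped. -/
def applyCtxCtx : ACtx → ACtx → DCtx
  | [], _ => []
  | CtxEntry.uvar α κ :: Ω, CtxEntry.uvar _ _ :: Γ =>
      DEntry.uvar α κ :: applyCtxCtx Ω Γ
  | CtxEntry.tvar x A :: Ω, CtxEntry.tvar _ _ :: Γ =>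
      DEntry.tvar x (applyCtx Ω A) :: applyCtxCtx Ω Γ
  | CtxEntry.eqn α τ :: Ω, CtxEntry.eqn _ _ :: Γ =>
      substDCtx (applyCtx Ω τ) α (applyCtxCtx Ω Γ)
  | CtxEntry.marker _ :: Ω, CtxEntry.marker _ :: Γ => applyCtxCtx Ω Γ
  | CtxEntry.solved _ _ _ :: Ω, CtxEntry.solved _ _ _ :: Γ => applyCtxCtx Ω Γ
  | CtxEntry.solved _ _ _ :: Ω, CtxEntry.evar _ _ :: Γ => applyCtxCtx Ω Γ
  | CtxEntry.solved _ _ _ :: Ω, Γ => applyCtxCtx Ω Γ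
  | CtxEntry.evar _ _ :: Ω, Γ => applyCtxCtx Ω Γ
  | _ :: Ω, Γ => applyCtxCtx Ω Γ

/-!
Write `Γ⁻` for `Γ` with its soft entries removed. If `Γ ⟶ Ω` with `Ω` complete, then
`[Ω]Γ⁻ = [Ω]Γ`: each block of soft entries of `Γ` between two rigid ones is matched in `Ω` by a
block of at least as many solved entries, and these absorb it. Extension preserves the number of
rigid entries, so `Ω_Z` is soft too, and a soft block at the right end of `Ω` is skipped by a
context whose rightmost entry is rigid. Hence
`[Ω, Ω_Z](Δ, Θ) = [Ω, Ω_Z]Δ⁻ = [Ω]Δ⁻ = [Ω]Δ`.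
-/

namespace CtxEntry

def isSoft : CtxEntry → Bool
  | evar _ _ => true
  | solved _ _ _ => true
  | _ => false

end CtxEntry

theorem soft_iff {Θ : ACtx} : Soft Θ ↔ ∀ e ∈ Θ, e.isSoft = true := by
  refine forall₂_congr fun e _ => ?_
  cases e <;> simp [CtxEntry.isSoft]

theorem soft_nil : Soft [] := soft_iff.2 (by simp)

theorem Soft.isSoft_of_cons {e : CtxEntry} {S : ACtx} (h : Soft (e :: S)) : e.isSoft = true :=
  soft_iff.1 h e List.mem_cons_self

theorem Soft.of_cons {e : CtxEntry} {S : ACtx} (h : Soft (e :: S)) : Soft S :=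
  soft_iff.2 fun e' he' => soft_iff.1 h e' (List.mem_cons_of_mem e he')

theorem Soft.concat {S : ACtx} (hS : Soft S) {e : CtxEntry} (he : e.isSoft = true) :
    Soft (S ++ [e]) := by
  rw [soft_iff] at hS ⊢
  simpa [or_imp, forall_and] using ⟨hS, he⟩

theorem Complete.anti {Γ Δ : ACtx} (hΔ : Complete Δ) (h : Γ ⊆ Δ) : Complete Γ :=
  fun a κ hmem => hΔ a κ (h hmem)

theorem Complete.of_cons {e : CtxEntry} {Ω : ACtx} (h : Complete (e :: Ω)) : Complete Ω :=
  h.anti (List.subset_cons_self _ _)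

def dropSoft (Γ : ACtx) : ACtx :=
  Γ.filter fun e => !e.isSoft

theorem dropSoft_cons_of_isSoft {e : CtxEntry} (he : e.isSoft = true) (Γ : ACtx) :
    dropSoft (e :: Γ) = dropSoft Γ := by
  simp [dropSoft, he]

theorem dropSoft_cons_of_not_isSoft {e : CtxEntry} (he : e.isSoft = false) (Γ : ACtx) :
    dropSoft (e :: Γ) = e :: dropSoft Γ := by
  simp [dropSoft, he]

theorem dropSoft_append (Γ Δ : ACtx) : dropSoft (Γ ++ Δ) = dropSoft Γ ++ dropSoft Δ :=
  List.filter_append _ _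

theorem dropSoft_eq_nil_iff {Θ : ACtx} : dropSoft Θ = [] ↔ Soft Θ := by
  simp [dropSoft, soft_iff]

theorem head_dropSoft (Γ : ACtx) : ∀ e ∈ (dropSoft Γ).head?, e.isSoft = false := by
  intro e he
  simpa using List.of_mem_filter (List.mem_of_mem_head? he)

theorem CtxExt.length_dropSoft {Γ Δ : ACtx} (h : CtxExt Γ Δ) :
    (dropSoft Γ).length = (dropSoft Δ).length := by
  induction h <;> simp_all [dropSoft, CtxEntry.isSoft]

theorem CtxExt.soft_of_append {Θ Δ Ω ΩZ : ACtx} (h₁ : CtxExt (Θ ++ Δ) (ΩZ ++ Ω))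
    (h₂ : CtxExt Δ Ω) (hΘ : Soft Θ) : Soft ΩZ := by
  have hlen := h₁.length_dropSoft
  rw [dropSoft_append, dropSoft_append, dropSoft_eq_nil_iff.2 hΘ, List.nil_append,
    h₂.length_dropSoft, List.length_append] at hlen
  exact dropSoft_eq_nil_iff.1 (List.eq_nil_of_length_eq_zero (by omega))

theorem applyCtxCtx_cons_of_isSoft {e : CtxEntry} (he : e.isSoft = true) (Ω : ACtx) {G : ACtx}
    (hG : ∀ g ∈ G.head?, g.isSoft = false) : applyCtxCtx (e :: Ω) G = applyCtxCtx Ω G := by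
  rcases G with _ | ⟨g, G⟩
  · cases e <;> simp_all [CtxEntry.isSoft, applyCtxCtx]
  · have hg : g.isSoft = false := hG g rfl
    cases e <;> cases g <;> simp_all [CtxEntry.isSoft, applyCtxCtx]

theorem applyCtxCtx_append_of_soft {Z : ACtx} (hZ : Soft Z) (Ω : ACtx) {G : ACtx}
    (hG : ∀ g ∈ G.head?, g.isSoft = false) : applyCtxCtx (Z ++ Ω) G = applyCtxCtx Ω G := by
  induction Z with
  | nil => rfl
  | cons e Z ih =>
    rw [List.cons_append, applyCtxCtx_cons_of_isSoft hZ.isSoft_of_cons _ hG, ih hZ.of_cons]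

theorem applyCtxCtx_solved_cons_cons {a κ τ} {g : CtxEntry} (hg : g.isSoft = true) (Ω G : ACtx) :
    applyCtxCtx (CtxEntry.solved a κ τ :: Ω) (g :: G) = applyCtxCtx Ω G := by
  cases g <;> first | rfl | simp [CtxEntry.isSoft] at hg

/- Generalised over the soft block `S`: a solved entry of `Ω` added by `addSolved` may absorb a
soft entry of `Γ` that the extension matches further left, so the induction must allow some
rightmost soft entries of `Γ` to have been absorbed already. -/
def ApplyIgnoresSoft (Γ Ω : ACtx) : Prop :=
  ∀ S G, Soft S → Γ = S ++ G → applyCtxCtx Ω (dropSoft G) = applyCtxCtx Ω G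

theorem ApplyIgnoresSoft.solved_cons {Γ Ω : ACtx} (h : ApplyIgnoresSoft Γ Ω) (a : ℕ) (κ : Srt)
    (τ : Ty) : ApplyIgnoresSoft Γ (CtxEntry.solved a κ τ :: Ω) := by
  rintro S (_ | ⟨g, G⟩) hS hΓ
  · rfl
  cases hg : g.isSoft
  · have hhead : ∀ e ∈ (g :: G).head?, e.isSoft = false := by simpa using hg
    rw [dropSoft_cons_of_not_isSoft hg, ← dropSoft_cons_of_not_isSoft hg,
      applyCtxCtx_cons_of_isSoft rfl _ (head_dropSoft _), applyCtxCtx_cons_of_isSoft rfl _ hhead]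
    exact h S _ hS hΓ
  · rw [dropSoft_cons_of_isSoft hg, applyCtxCtx_cons_of_isSoft rfl _ (head_dropSoft G),
      applyCtxCtx_solved_cons_cons hg]
    exact h (S ++ [g]) G (hS.concat hg) (by simp [hΓ])

theorem ApplyIgnoresSoft.cons_solved_cons {Γ Ω : ACtx} (h : ApplyIgnoresSoft Γ Ω) {e : CtxEntry}
    (he : e.isSoft = true) (a : ℕ) (κ : Srt) (τ : Ty) :
    ApplyIgnoresSoft (e :: Γ) (CtxEntry.solved a κ τ :: Ω) := by
  rintro (_ | ⟨s, S⟩) G hS hΓ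
  · rw [List.nil_append] at hΓ
    subst hΓ
    rw [dropSoft_cons_of_isSoft he, applyCtxCtx_cons_of_isSoft rfl _ (head_dropSoft Γ),
      applyCtxCtx_solved_cons_cons he]
    exact h [] Γ soft_nil rfl
  · exact h.solved_cons a κ τ S G hS.of_cons (List.cons.inj hΓ).2

theorem ApplyIgnoresSoft.cons_cons {Γ Ω : ACtx} (h : ApplyIgnoresSoft Γ Ω) {e e' : CtxEntry}
    (he : e.isSoft = false) {F : DCtx → DCtx}
    (hF : ∀ G, applyCtxCtx (e' :: Ω) (e :: G) = F (applyCtxCtx Ω G)) :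
    ApplyIgnoresSoft (e :: Γ) (e' :: Ω) := by
  rintro (_ | ⟨s, S⟩) G hS hΓ
  · rw [List.nil_append] at hΓ
    subst hΓ
    rw [dropSoft_cons_of_not_isSoft he, hF, hF, h [] Γ soft_nil rfl]
  · obtain rfl : e = s := List.cons.inj hΓ |>.1
    simp [hS.isSoft_of_cons] at he

theorem CtxExt.applyIgnoresSoft {Γ Ω : ACtx} (h : CtxExt Γ Ω) (hΩ : Complete Ω) :
    ApplyIgnoresSoft Γ Ω := by
  induction h with
  | nil =>
    rintro S G - hΓ
    rw [(List.append_eq_nil_iff.1 hΓ.symm).2]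
    rfl
  | tvar _ _ ih => exact (ih hΩ.of_cons).cons_cons rfl fun _ => rfl
  | uvar _ ih => exact (ih hΩ.of_cons).cons_cons rfl fun _ => rfl
  | eqn _ _ ih => exact (ih hΩ.of_cons).cons_cons rfl fun _ => rfl
  | marker _ ih => exact (ih hΩ.of_cons).cons_cons (F := id) rfl fun _ => rfl
  | evar _ _ | add _ _ => exact absurd List.mem_cons_self (hΩ _ _)
  | solved _ _ ih | solve _ ih => exact (ih hΩ.of_cons).cons_solved_cons rfl _ _ _
  | addSolved _ ih => exact (ih hΩ.of_cons).solved_cons _ _ _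

theorem CtxExt.applyCtxCtx_dropSoft {Γ Ω : ACtx} (h : CtxExt Γ Ω) (hΩ : Complete Ω) :
    applyCtxCtx Ω (dropSoft Γ) = applyCtxCtx Ω Γ :=
  h.applyIgnoresSoft hΩ [] Γ soft_nil rfl

/-- **Softness goes away**: if `Δ, Θ ⟶ Ω, Ω_Z` where `Δ ⟶ Ω` and `Θ` is soft
(only existential declarations, solved or unsolved), then
`[Ω, Ω_Z](Δ, Θ) = [Ω]Δ`. -/
theorem softness_goes_away (Δ Θ Ω ΩZ : ACtx)
    (hcomp : Complete (ΩZ ++ Ω)) (hsoft : Soft Θ)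
    (h₁ : CtxExt (Θ ++ Δ) (ΩZ ++ Ω)) (h₂ : CtxExt Δ Ω) :
    applyCtxCtx (ΩZ ++ Ω) (Θ ++ Δ) = applyCtxCtx Ω Δ := by
  have hΩ : Complete Ω := hcomp.anti (List.subset_append_right _ _)
  rw [← h₁.applyCtxCtx_dropSoft hcomp, dropSoft_append, dropSoft_eq_nil_iff.2 hsoft,
    List.nil_append, applyCtxCtx_append_of_soft (h₁.soft_of_append h₂ hsoft) Ω (head_dropSoft Δ),
    h₂.applyCtxCtx_dropSoft hΩ]
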